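/- Recursive doubling computes total sums correctly: for a vector v : Fin (2^L) → ℝ, define v₀ = v and v_{t+1}(i) = v_t(i) + v_t(i + 2^t mod 2^L). Then v_L(0) = Σ_i v(i). -/
import Mathlib


open Finset in
/-- Correctness of the recursive-doubling (rotate-and-add) total sum: starting from
    v : Fin (2^L) → ℝ and applying v_{t+1}(i) = v_t(i) + v_t((i + 2^t) mod 2^L) for
    L steps, entry 0 holds the total sum of v. -/
theorem recursive_doubling_sum (L : ℕ) (v : Fin (2 ^ L) → ℝ)
    (f : ℕ → Fin (2 ^ L) → ℝ)
    (hf0 : f 0 = v)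
    (hstep : ∀ t (i : Fin (2 ^ L)),
      f (t + 1) i = f t i + f t ⟨((i : ℕ) + 2 ^ t) % 2 ^ L, Nat.mod_lt _ (by positivity)⟩) :
    f L ⟨0, by positivity⟩ = ∑ i, v i := by
  have hN : 0 < 2 ^ L := by positivity
  have key : ∀ t (i : Fin (2 ^ L)),
      f t i = ∑ j ∈ range (2 ^ t), v ⟨((i : ℕ) + j) % 2 ^ L, Nat.mod_lt _ hN⟩ := by
    intro t
    induction t with
    | zero =>
      intro i
      simp [hf0, Nat.mod_eq_of_lt i.isLt]
    | succ t ih =>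
      intro i
      rw [hstep, ih, ih]
      rw [pow_succ, mul_two, Finset.sum_range_add]
      congr 1
      apply Finset.sum_congr rfl
      intro j _
      congr 2
      simp only [Fin.val_mk]
      rw [Nat.mod_add_mod, Nat.add_assoc]
  rw [key]
  rw [← Fin.sum_univ_eq_sum_range (fun j => v ⟨(0 + j) % 2 ^ L, Nat.mod_lt _ hN⟩)]
  apply Finset.sum_congr rfl
  intro i _
  congr 1
  simp [Nat.mod_eq_of_lt i.isLt]
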